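/- arXiv:2402.06670 — 2 statements merged into one kernel-verified Lean document; each statement's English description precedes it below -/
import Mathlib

section
/- For real numbers l, a, b with 0 < b ≤ a < l ≤ L, where L := √(a² + b²), the intersection probability P(l,a,b) equals (1/π)·(L² + l²)/(ab) − (2/π)·((l/a)·√(1 − a²/l²) + (l/b)·√(1 − b²/l²)) + (2/π)·(π − arcsin(a/l) − arcsin(b/l)). -/
open Real MeasureTheory Filter

/-- `A(l,a) = ∫_0^π min(a, l·|cos φ|) dφ` -/
noncomputable def A2 (l a : ℝ) : ℝ := ∫ φ in (0:ℝ)..π, min a (l * |Real.cos φ|)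

/-- `B(l,b) = ∫_0^π min(b, l·sin φ) dφ` -/
noncomputable def B2 (l b : ℝ) : ℝ := ∫ φ in (0:ℝ)..π, min b (l * Real.sin φ)

/-- `AB(l,a,b) = ∫_0^π min(a, l·|cos φ|)·min(b, l·sin φ) dφ` -/
noncomputable def AB2 (l a b : ℝ) : ℝ :=
  ∫ φ in (0:ℝ)..π, min a (l * |Real.cos φ|) * min b (l * Real.sin φ)

/-- Intersection probability for the 2D Buffon–Laplace needle problem. -/
noncomputable def P2 (l a b : ℝ) : ℝ :=
  (b * A2 l a + a * B2 l b - AB2 l a b) / (π * a * b)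

/-- Intersection probability for the 2D spherocylinder Buffon–Laplace problem. -/
noncomputable def P2sc (l σ a b : ℝ) : ℝ :=
  ((b - σ) * A2 l (a - σ) + (a - σ) * B2 l (b - σ) - AB2 l (a - σ) (b - σ)
    + (σ * a + σ * b - σ ^ 2) * π) / (π * a * b)

/-- `A³ᴰ(l,a) = ∫_0^{π/2} ∫_0^π min(a, l·sin ψ·|cos φ|) dφ dψ` -/
noncomputable def A3 (l a : ℝ) : ℝ :=
  ∫ ψ in (0:ℝ)..(π/2), ∫ φ in (0:ℝ)..π, min a (l * Real.sin ψ * |Real.cos φ|)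

/-- `B³ᴰ(l,b) = ∫_0^{π/2} ∫_0^π min(b, l·sin ψ·sin φ) dφ dψ` -/
noncomputable def B3 (l b : ℝ) : ℝ :=
  ∫ ψ in (0:ℝ)..(π/2), ∫ φ in (0:ℝ)..π, min b (l * Real.sin ψ * Real.sin φ)

/-- `AB³ᴰ(l,a,b) = ∫_0^{π/2} ∫_0^π min(a, l·sin ψ·|cos φ|)·min(b, l·sin ψ·sin φ) dφ dψ` -/
noncomputable def AB3 (l a b : ℝ) : ℝ :=
  ∫ ψ in (0:ℝ)..(π/2), ∫ φ in (0:ℝ)..π,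
    min a (l * Real.sin ψ * |Real.cos φ|) * min b (l * Real.sin ψ * Real.sin φ)

/-- `S³ᴰ(l,a,b) = b·A³ᴰ(l,a) + a·B³ᴰ(l,b) − AB³ᴰ(l,a,b)` -/
noncomputable def S3 (l a b : ℝ) : ℝ := b * A3 l a + a * B3 l b - AB3 l a b

/-- `F(α,β,t) = ∫_α^β √(sin²ψ − t²) dψ` -/
noncomputable def Faux (α β t : ℝ) : ℝ :=
  ∫ ψ in α..β, Real.sqrt (Real.sin ψ ^ 2 - t ^ 2)

/-- `G(α,β,t) = ∫_α^β (π/2 − arcsin(t / sin ψ)) dψ` -/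
noncomputable def Gaux (α β t : ℝ) : ℝ :=
  ∫ ψ in α..β, (π / 2 - Real.arcsin (t / Real.sin ψ))

/-!
The integrands depend on `φ` only through `|cos φ|` and `sin φ`, so they are symmetric about
`π / 2` and it suffices to integrate over `[0, π / 2]`. There `min c (l sin φ)` switches from
`l sin φ` to `c` at `arcsin (c / l)`, and `min a (l cos φ)` switches from `a` to `l cos φ` at
`arccos (a / l)`; the substitution `φ ↦ π / 2 - φ` turns the latter into the former, which
gives `A` and `B`. The hypothesis `l ≤ √(a² + b²)` says exactly that
`arccos (a / l) ≤ arcsin (b / l)`, so the product integrand of `AB` is `a l sin φ`,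
`l² sin φ cos φ` and `b l cos φ` on three consecutive intervals, each of which integrates in
closed form.
-/

open Set

namespace Real

theorem le_arccos_iff_le_cos {x y : ℝ} (hx : x ∈ Icc 0 π) (hy : y ∈ Icc (-1 : ℝ) 1) :
    x ≤ arccos y ↔ y ≤ cos x := by
  rw [arccos_eq_pi_div_two_sub_arcsin, le_sub_comm, arcsin_le_iff_le_sin hy, sin_pi_div_two_sub]
  constructor <;> linarith [hx.1, hx.2]

theorem arccos_le_iff_cos_le {x y : ℝ} (hx : x ∈ Icc 0 π) (hy : y ∈ Icc (-1 : ℝ) 1) :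
    arccos y ≤ x ↔ cos x ≤ y := by
  rw [arccos_eq_pi_div_two_sub_arcsin, sub_le_comm, le_arcsin_iff_sin_le _ hy, sin_pi_div_two_sub]
  constructor <;> linarith [hx.1, hx.2]

section MinMul

variable {c l φ : ℝ}

theorem min_mul_sin_of_le_arcsin (hl : 0 < l) (hc : c / l ∈ Icc (-1 : ℝ) 1)
    (hφ : φ ∈ Icc (-(π / 2)) (arcsin (c / l))) : min c (l * sin φ) = l * sin φ := by
  have hsin : sin φ ≤ c / l :=
    (le_arcsin_iff_sin_le ⟨hφ.1, hφ.2.trans (arcsin_le_pi_div_two _)⟩ hc).1 hφ.2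
  exact min_eq_right ((le_div_iff₀' hl).1 hsin)

theorem min_mul_sin_of_arcsin_le (hl : 0 < l) (hc : c / l ∈ Icc (-1 : ℝ) 1)
    (hφ : φ ∈ Icc (arcsin (c / l)) (π / 2)) : min c (l * sin φ) = c := by
  have hsin : c / l ≤ sin φ :=
    (arcsin_le_iff_le_sin hc ⟨(neg_pi_div_two_le_arcsin _).trans hφ.1, hφ.2⟩).1 hφ.1
  exact min_eq_left ((div_le_iff₀' hl).1 hsin)

theorem min_mul_cos_of_le_arccos (hl : 0 < l) (hc : c / l ∈ Icc (-1 : ℝ) 1)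
    (hφ : φ ∈ Icc 0 (arccos (c / l))) : min c (l * cos φ) = c := by
  have hcos : c / l ≤ cos φ :=
    (le_arccos_iff_le_cos ⟨hφ.1, hφ.2.trans (arccos_le_pi _)⟩ hc).1 hφ.2
  exact min_eq_left ((div_le_iff₀' hl).1 hcos)

theorem min_mul_cos_of_arccos_le (hl : 0 < l) (hc : c / l ∈ Icc (-1 : ℝ) 1)
    (hφ : φ ∈ Icc (arccos (c / l)) π) : min c (l * cos φ) = l * cos φ := by
  have hcos : cos φ ≤ c / l :=
    (arccos_le_iff_cos_le ⟨(arccos_nonneg _).trans hφ.1, hφ.2⟩ hc).1 hφ.1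
  exact min_eq_right ((le_div_iff₀' hl).1 hcos)

end MinMul

end Real

theorem integral_eq_two_mul_integral_half_of_symm {f : ℝ → ℝ} {T : ℝ} (hf : Continuous f)
    (hsymm : ∀ x, f (T - x) = f x) :
    ∫ x in 0..T, f x = 2 * ∫ x in 0..T / 2, f x := by
  have hreflect : ∫ x in T / 2..T, f x = ∫ x in 0..T / 2, f x := by
    simpa [hsymm, sub_half] using
      (intervalIntegral.integral_comp_sub_left f (a := 0) (b := T / 2) T).symm
  rw [← intervalIntegral.integral_add_adjacent_intervals (hf.intervalIntegrable 0 (T / 2))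
    (hf.intervalIntegrable (T / 2) T), hreflect, two_mul]

theorem integral_comp_abs_cos_sin_zero_pi {g : ℝ → ℝ → ℝ}
    (hg : Continuous (Function.uncurry g)) :
    ∫ φ in 0..π, g |cos φ| (sin φ) = 2 * ∫ φ in 0..π / 2, g (cos φ) (sin φ) := by
  have hcont : Continuous fun φ => g |cos φ| (sin φ) :=
    hg.comp ((continuous_abs.comp continuous_cos).prodMk continuous_sin)
  rw [integral_eq_two_mul_integral_half_of_symm hcont (by simp [cos_pi_sub, sin_pi_sub])]
  congr 1
  refine intervalIntegral.integral_congr fun φ hφ => ?_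
  rw [uIcc_of_le (by positivity)] at hφ
  simp only [abs_of_nonneg (cos_nonneg_of_mem_Icc ⟨by linarith [hφ.1, pi_pos], hφ.2⟩)]

theorem integral_comp_cos_zero_pi_div_two (g : ℝ → ℝ) :
    ∫ φ in 0..π / 2, g (cos φ) = ∫ φ in 0..π / 2, g (sin φ) := by
  simpa [cos_pi_div_two_sub] using
    (intervalIntegral.integral_comp_sub_left (fun φ => g (cos φ)) (a := 0) (b := π / 2)
      (π / 2)).symm

theorem integral_min_mul_sin_zero_pi_div_two {c l : ℝ} (hc : 0 ≤ c) (hcl : c ≤ l)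
    (hl : 0 < l) :
    ∫ φ in 0..π / 2, min c (l * sin φ)
      = l * (1 - √(1 - c ^ 2 / l ^ 2)) + c * (π / 2 - arcsin (c / l)) := by
  have hcl₀ : 0 ≤ c / l := div_nonneg hc hl.le
  have hcl₁ : c / l ∈ Icc (-1 : ℝ) 1 := ⟨by linarith, (div_le_one hl).2 hcl⟩
  set β := arcsin (c / l)
  have hβ₀ : 0 ≤ β := arcsin_nonneg.2 hcl₀
  have hβ₁ : β ≤ π / 2 := arcsin_le_pi_div_two _
  have hcont : Continuous fun φ => min c (l * sin φ) := by fun_prop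
  have hsin_le : ∫ φ in 0..β, min c (l * sin φ) = ∫ φ in 0..β, l * sin φ := by
    refine intervalIntegral.integral_congr fun φ hφ => ?_
    rw [uIcc_of_le hβ₀] at hφ
    exact min_mul_sin_of_le_arcsin hl hcl₁ ⟨by linarith [hφ.1, pi_pos], hφ.2⟩
  have hle_sin : ∫ φ in β..π / 2, min c (l * sin φ) = ∫ φ in β..π / 2, c := by
    refine intervalIntegral.integral_congr fun φ hφ => ?_
    rw [uIcc_of_le hβ₁] at hφ
    exact min_mul_sin_of_arcsin_le hl hcl₁ hφ
  rw [← intervalIntegral.integral_add_adjacent_intervals (hcont.intervalIntegrable 0 β)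
    (hcont.intervalIntegrable β (π / 2)), hsin_le, hle_sin, intervalIntegral.integral_const_mul,
    integral_sin, intervalIntegral.integral_const, cos_zero, cos_arcsin, div_pow, smul_eq_mul]
  ring

theorem arccos_div_le_arcsin_div {a b l : ℝ} (ha : 0 ≤ a) (hb : 0 ≤ b) (hal : a ≤ l)
    (hl : 0 < l) (hlab : l ^ 2 ≤ a ^ 2 + b ^ 2) : arccos (a / l) ≤ arcsin (b / l) := by
  have hal₀ : 0 ≤ a / l := div_nonneg ha hl.le
  refine (arccos_le_iff_cos_le ⟨arcsin_nonneg.2 (div_nonneg hb hl.le),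
    (arcsin_le_pi_div_two _).trans (by linarith [pi_pos])⟩
    ⟨by linarith, (div_le_one hl).2 hal⟩).2 ?_
  rw [cos_arcsin, sqrt_le_left hal₀, div_pow, div_pow, sub_le_iff_le_add, ← add_div,
    le_div_iff₀ (by positivity), one_mul]
  linarith

theorem integral_min_mul_cos_mul_min_mul_sin_zero_pi_div_two {a b l : ℝ}
    (ha : 0 ≤ a) (hb : 0 ≤ b) (hal : a ≤ l) (hbl : b ≤ l) (hl : 0 < l)
    (hlab : l ^ 2 ≤ a ^ 2 + b ^ 2) :
    ∫ φ in 0..π / 2, min a (l * cos φ) * min b (l * sin φ)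
      = a * l + b * l - (a ^ 2 + b ^ 2 + l ^ 2) / 2 := by
  have hal₀ : 0 ≤ a / l := div_nonneg ha hl.le
  have hbl₀ : 0 ≤ b / l := div_nonneg hb hl.le
  have hal₁ : a / l ∈ Icc (-1 : ℝ) 1 := ⟨by linarith, (div_le_one hl).2 hal⟩
  have hbl₁ : b / l ∈ Icc (-1 : ℝ) 1 := ⟨by linarith, (div_le_one hl).2 hbl⟩
  set α := arccos (a / l)
  set β := arcsin (b / l)
  have hα₀ : 0 ≤ α := arccos_nonneg _
  have hβ₁ : β ≤ π / 2 := arcsin_le_pi_div_two _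
  have hαβ : α ≤ β := arccos_div_le_arcsin_div ha hb hal hl hlab
  have hsin_α : sin α ^ 2 = 1 - (a / l) ^ 2 := by
    rw [sin_arccos, sq_sqrt (by nlinarith [hal₁.1, hal₁.2])]
  have hcont : Continuous fun φ => min a (l * cos φ) * min b (l * sin φ) := by fun_prop
  have hint := fun u v => hcont.intervalIntegrable (μ := volume) u v
  have h₁ : ∫ φ in 0..α, min a (l * cos φ) * min b (l * sin φ)
      = ∫ φ in 0..α, a * (l * sin φ) := by
    refine intervalIntegral.integral_congr fun φ hφ => ?_
    rw [uIcc_of_le hα₀] at hφ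
    simp only [min_mul_cos_of_le_arccos hl hal₁ hφ,
      min_mul_sin_of_le_arcsin hl hbl₁ ⟨by linarith [hφ.1, pi_pos], hφ.2.trans hαβ⟩]
  have h₂ : ∫ φ in α..β, min a (l * cos φ) * min b (l * sin φ)
      = ∫ φ in α..β, l ^ 2 * (sin φ * cos φ) := by
    refine intervalIntegral.integral_congr fun φ hφ => ?_
    rw [uIcc_of_le hαβ] at hφ
    simp only [min_mul_cos_of_arccos_le hl hal₁ ⟨hφ.1, by linarith [hφ.2, pi_pos]⟩,
      min_mul_sin_of_le_arcsin hl hbl₁ ⟨by linarith [hφ.1, pi_pos], hφ.2⟩]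
    ring
  have h₃ : ∫ φ in β..π / 2, min a (l * cos φ) * min b (l * sin φ)
      = ∫ φ in β..π / 2, l * cos φ * b := by
    refine intervalIntegral.integral_congr fun φ hφ => ?_
    rw [uIcc_of_le hβ₁] at hφ
    simp only
      [min_mul_cos_of_arccos_le hl hal₁ ⟨hαβ.trans hφ.1, by linarith [hφ.2, pi_pos]⟩,
      min_mul_sin_of_arcsin_le hl hbl₁ hφ]
  rw [← intervalIntegral.integral_add_adjacent_intervals (hint 0 α) (hint α (π / 2)),
    ← intervalIntegral.integral_add_adjacent_intervals (hint α β) (hint β (π / 2)),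
    h₁, h₂, h₃, intervalIntegral.integral_const_mul, intervalIntegral.integral_const_mul,
    integral_sin, intervalIntegral.integral_const_mul, integral_sin_mul_cos₁,
    intervalIntegral.integral_mul_const, intervalIntegral.integral_const_mul, integral_cos,
    cos_zero, sin_pi_div_two, hsin_α, cos_arccos hal₁.1 hal₁.2, sin_arcsin hbl₁.1 hbl₁.2]
  field_simp
  ring

section Needle

variable {l a b : ℝ}

theorem A2_eq (ha : 0 ≤ a) (hal : a ≤ l) (hl : 0 < l) :
    A2 l a = 2 * (l * (1 - √(1 - a ^ 2 / l ^ 2)) + a * (π / 2 - arcsin (a / l))) := calc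
  A2 l a = 2 * ∫ φ in 0..π / 2, min a (l * cos φ) :=
    integral_comp_abs_cos_sin_zero_pi (g := fun x _ => min a (l * x)) (by fun_prop)
  _ = 2 * ∫ φ in 0..π / 2, min a (l * sin φ) :=
    congrArg (2 * ·) (integral_comp_cos_zero_pi_div_two fun x => min a (l * x))
  _ = _ := by rw [integral_min_mul_sin_zero_pi_div_two ha hal hl]

theorem B2_eq (hb : 0 ≤ b) (hbl : b ≤ l) (hl : 0 < l) :
    B2 l b = 2 * (l * (1 - √(1 - b ^ 2 / l ^ 2)) + b * (π / 2 - arcsin (b / l))) := calc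
  B2 l b = 2 * ∫ φ in 0..π / 2, min b (l * sin φ) :=
    integral_comp_abs_cos_sin_zero_pi (g := fun _ y => min b (l * y)) (by fun_prop)
  _ = _ := by rw [integral_min_mul_sin_zero_pi_div_two hb hbl hl]

theorem AB2_eq (ha : 0 ≤ a) (hb : 0 ≤ b) (hal : a ≤ l) (hbl : b ≤ l) (hl : 0 < l)
    (hlab : l ^ 2 ≤ a ^ 2 + b ^ 2) :
    AB2 l a b = 2 * a * l + 2 * b * l - a ^ 2 - b ^ 2 - l ^ 2 := calc
  AB2 l a b = 2 * ∫ φ in 0..π / 2, min a (l * cos φ) * min b (l * sin φ) :=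
    integral_comp_abs_cos_sin_zero_pi (g := fun x y => min a (l * x) * min b (l * y))
      (by fun_prop)
  _ = _ := by
    rw [integral_min_mul_cos_mul_min_mul_sin_zero_pi_div_two ha hb hal hbl hl hlab]
    ring

end Needle

theorem stmt7 (l a b : ℝ) (hb : 0 < b) (hba : b ≤ a) (hal : a < l)
    (hlL : l ≤ Real.sqrt (a ^ 2 + b ^ 2)) :
    P2 l a b = 1 / π * ((Real.sqrt (a ^ 2 + b ^ 2) ^ 2 + l ^ 2) / (a * b))
      - 2 / π * ((l / a) * Real.sqrt (1 - a ^ 2 / l ^ 2)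
        + (l / b) * Real.sqrt (1 - b ^ 2 / l ^ 2))
      + 2 / π * (π - Real.arcsin (a / l) - Real.arcsin (b / l)) := by
  have ha : 0 < a := hb.trans_le hba
  have hl : 0 < l := ha.trans hal
  have hbl : b ≤ l := hba.trans hal.le
  have hlab : l ^ 2 ≤ a ^ 2 + b ^ 2 := (le_sqrt hl.le (by positivity)).1 hlL
  rw [P2, A2_eq ha.le hal.le hl, B2_eq hb.le hbl hl, AB2_eq ha.le hb.le hal.le hbl hl hlab,
    sq_sqrt (by positivity)]
  field_simp
  ring
end

section
/- For real numbers l, a, b with 0 < b < l ≤ a, one has S³ᴰ(l,a,b) = 2lb + [2la − 2la·F(arcsin(b/l), π/2, b/l) + 2ab·G(arcsin(b/l), π/2, b/l)] − [(l²/2)·arcsin(b/l) + (3/2)·lb·√(1 − b²/l²) − b²·(π/2 − arcsin(b/l))]. -/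
/-! For fixed ψ every inner integrand depends on ψ only through `s = l sin ψ ≤ l ≤ a`, so the
cap `a` is never reached and `min a (s |cos φ|) = s |cos φ|`. The inner integrands are symmetric
under `φ ↦ π - φ`, and on `[0, π/2]` the cap `b` in `min b (s sin φ)` is attained exactly from
`φ = arcsin (b / s)` on; splitting there gives the inner integrals in closed form. The outer
integrals are split in the same way at `ψ = arcsin (b / l)`, where `l sin ψ` reaches `b`, and on
each piece the integrand is elementary except for the two terms that define `F` and `G`. -/

open Real MeasureTheory Filter

open Set intervalIntegral

theorem integral_zero_pi_eq_two_mul_of_symm {f : ℝ → ℝ} (hf : Continuous f)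
    (hsymm : ∀ x, f (π - x) = f x) :
    ∫ x in (0:ℝ)..π, f x = 2 * ∫ x in (0:ℝ)..π / 2, f x := by
  have hright : ∫ x in π / 2..π, f x = ∫ x in (0:ℝ)..π / 2, f x := by
    simpa only [hsymm, sub_self, show π - π / 2 = π / 2 by ring] using
      integral_comp_sub_left (a := π / 2) (b := π) f π
  rw [← integral_add_adjacent_intervals (hf.intervalIntegrable 0 (π / 2))
    (hf.intervalIntegrable (π / 2) π), hright]
  ring

theorem integral_split_at_arcsin {f g h : ℝ → ℝ} {s b : ℝ} (hb : 0 < b) (hbs : b ≤ s)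
    (hf : ContinuousOn f (Icc 0 (π / 2)))
    (hg : ∀ x ∈ Icc 0 (π / 2), s * sin x ≤ b → f x = g x)
    (hh : ∀ x ∈ Icc 0 (π / 2), b ≤ s * sin x → f x = h x) :
    ∫ x in (0:ℝ)..π / 2, f x
      = (∫ x in (0:ℝ)..arcsin (b / s), g x) + ∫ x in arcsin (b / s)..π / 2, h x := by
  have hs : 0 < s := hb.trans_le hbs
  set c := arcsin (b / s)
  have hc0 : 0 ≤ c := arcsin_nonneg.2 (div_nonneg hb.le hs.le)
  have hc1 : c ≤ π / 2 := arcsin_le_pi_div_two _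
  have hsinc : s * sin c = b := by
    rw [sin_arcsin (by linarith [div_nonneg hb.le hs.le]) ((div_le_one hs).2 hbs)]
    field_simp
  have hsin_mono {x y : ℝ} (hx : 0 ≤ x) (hy : y ≤ π / 2) (hxy : x ≤ y) : s * sin x ≤ s * sin y :=
    mul_le_mul_of_nonneg_left
      (sin_le_sin_of_le_of_le_pi_div_two (by linarith [pi_pos]) hy hxy) hs.le
  rw [← integral_add_adjacent_intervals
    ((hf.mono (by rw [uIcc_of_le hc0]; exact Icc_subset_Icc le_rfl hc1)).intervalIntegrable)
    ((hf.mono (by rw [uIcc_of_le hc1]; exact Icc_subset_Icc hc0 le_rfl)).intervalIntegrable)]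
  congr 1
  · refine integral_congr fun x hx => ?_
    rw [uIcc_of_le hc0] at hx
    exact hg x ⟨hx.1, hx.2.trans hc1⟩ (hsinc ▸ hsin_mono hx.1 hc1 hx.2)
  · refine integral_congr fun x hx => ?_
    rw [uIcc_of_le hc1] at hx
    exact hh x ⟨hc0.trans hx.1, hx.2⟩ (hsinc ▸ hsin_mono hc0 hx.2 hx.1)

theorem min_mul_abs_cos_eq_of_mem_Icc {s a x : ℝ} (hs : 0 ≤ s) (hsa : s ≤ a)
    (hx : x ∈ Icc 0 (π / 2)) : min a (s * |cos x|) = s * cos x := by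
  have hcos : 0 ≤ cos x := cos_nonneg_of_mem_Icc ⟨by linarith [pi_pos, hx.1], hx.2⟩
  rw [abs_of_nonneg hcos]
  exact min_eq_right ((mul_le_of_le_one_right hs (cos_le_one x)).trans hsa)

theorem integral_min_mul_abs_cos {s a : ℝ} (hs : 0 ≤ s) (hsa : s ≤ a) :
    ∫ x in (0:ℝ)..π, min a (s * |cos x|) = 2 * s := by
  rw [integral_zero_pi_eq_two_mul_of_symm (by fun_prop) (by simp [cos_pi_sub]),
    integral_congr (g := fun x => s * cos x) fun x hx =>
      min_mul_abs_cos_eq_of_mem_Icc hs hsa (by rwa [uIcc_of_le (by positivity)] at hx),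
    intervalIntegral.integral_const_mul, integral_cos]
  simp

theorem integral_min_mul_sin_of_le {s b : ℝ} (hs : 0 ≤ s) (hsb : s ≤ b) :
    ∫ x in (0:ℝ)..π, min b (s * sin x) = 2 * s := by
  rw [integral_congr (g := fun x => s * sin x) fun x _ =>
      min_eq_right ((mul_le_of_le_one_right hs (sin_le_one x)).trans hsb),
    intervalIntegral.integral_const_mul, integral_sin]
  simp; ring

theorem integral_min_mul_sin_of_ge {s b : ℝ} (hb : 0 < b) (hbs : b ≤ s) :
    ∫ x in (0:ℝ)..π, min b (s * sin x)
      = 2 * s - 2 * √(s ^ 2 - b ^ 2) + 2 * b * (π / 2 - arcsin (b / s)) := by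
  have hs : 0 < s := hb.trans_le hbs
  have hcos : s * cos (arcsin (b / s)) = √(s ^ 2 - b ^ 2) := by
    rw [cos_arcsin, show s ^ 2 - b ^ 2 = s ^ 2 * (1 - (b / s) ^ 2) by field_simp,
      sqrt_mul (sq_nonneg s), sqrt_sq hs.le]
  rw [integral_zero_pi_eq_two_mul_of_symm (by fun_prop) (by simp [sin_pi_sub]),
    integral_split_at_arcsin (g := fun x => s * sin x) (h := fun _ => b) hb hbs
      (by fun_prop) (fun x _ hx => min_eq_right hx) (fun x _ hx => min_eq_left hx),
    intervalIntegral.integral_const_mul, integral_sin, intervalIntegral.integral_const,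
    smul_eq_mul, cos_zero]
  linear_combination (-2) * hcos

theorem integral_min_mul_abs_cos_mul_min_mul_sin_of_le {s a b : ℝ} (hs : 0 ≤ s) (hsa : s ≤ a)
    (hsb : s ≤ b) :
    ∫ x in (0:ℝ)..π, min a (s * |cos x|) * min b (s * sin x) = s ^ 2 := by
  rw [integral_zero_pi_eq_two_mul_of_symm (by fun_prop) (by simp [sin_pi_sub, cos_pi_sub]),
    integral_congr (g := fun x => s ^ 2 * (sin x * cos x)) fun x hx => by
      rw [uIcc_of_le (by positivity)] at hx
      rw [min_mul_abs_cos_eq_of_mem_Icc hs hsa hx,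
        min_eq_right ((mul_le_of_le_one_right hs (sin_le_one x)).trans hsb)]
      ring,
    intervalIntegral.integral_const_mul, integral_sin_mul_cos₁]
  simp; ring

theorem integral_min_mul_abs_cos_mul_min_mul_sin_of_ge {s a b : ℝ} (hb : 0 < b) (hbs : b ≤ s)
    (hsa : s ≤ a) :
    ∫ x in (0:ℝ)..π, min a (s * |cos x|) * min b (s * sin x) = 2 * b * s - b ^ 2 := by
  have hs : 0 < s := hb.trans_le hbs
  have hsin : s * sin (arcsin (b / s)) = b := by
    rw [sin_arcsin (by linarith [div_nonneg hb.le hs.le]) ((div_le_one hs).2 hbs)]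
    field_simp
  rw [integral_zero_pi_eq_two_mul_of_symm (by fun_prop) (by simp [sin_pi_sub, cos_pi_sub]),
    integral_split_at_arcsin (g := fun x => s ^ 2 * (sin x * cos x)) (h := fun x => s * b * cos x)
      hb hbs (by fun_prop)
      (fun x hx hx' => by rw [min_mul_abs_cos_eq_of_mem_Icc hs.le hsa hx, min_eq_right hx']; ring)
      (fun x hx hx' => by rw [min_mul_abs_cos_eq_of_mem_Icc hs.le hsa hx, min_eq_left hx']; ring),
    intervalIntegral.integral_const_mul, intervalIntegral.integral_const_mul,
    integral_sin_mul_cos₁, integral_cos, sin_zero, sin_pi_div_two]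
  linear_combination (s * sin (arcsin (b / s)) - b) * hsin

theorem A3_eq_of_le {l a : ℝ} (hl : 0 ≤ l) (hla : l ≤ a) : A3 l a = 2 * l := by
  unfold A3
  rw [integral_congr (g := fun ψ => 2 * (l * sin ψ)) fun ψ hψ => by
      rw [uIcc_of_le (by positivity)] at hψ
      exact integral_min_mul_abs_cos
        (mul_nonneg hl (sin_nonneg_of_nonneg_of_le_pi hψ.1 (by linarith [hψ.2, pi_pos])))
        ((mul_le_of_le_one_right hl (sin_le_one ψ)).trans hla),
    intervalIntegral.integral_const_mul, intervalIntegral.integral_const_mul, integral_sin]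
  simp

theorem B3_eq {l b : ℝ} (hb : 0 < b) (hbl : b ≤ l) :
    B3 l b = 2 * l - 2 * l * Faux (arcsin (b / l)) (π / 2) (b / l)
      + 2 * b * Gaux (arcsin (b / l)) (π / 2) (b / l) := by
  have hl : 0 < l := hb.trans_le hbl
  set t := b / l with ht
  set ψ₀ := arcsin t
  have hlt : l * t = b := by rw [ht]; field_simp
  have hψ₀ : ψ₀ ≤ π / 2 := arcsin_le_pi_div_two _
  have hsin_pos : ∀ ψ ∈ uIcc ψ₀ (π / 2), sin ψ ≠ 0 := by
    intro ψ hψ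
    rw [uIcc_of_le hψ₀] at hψ
    have ht0 : 0 < t := div_pos hb hl
    have ht1 : t ≤ 1 := (div_le_one hl).2 hbl
    refine (ht0.trans_le ((arcsin_le_iff_le_sin ⟨by linarith, ht1⟩ ⟨?_, hψ.2⟩).1 hψ.1)).ne'
    linarith [arcsin_nonneg.2 ht0.le, hψ.1, pi_pos]
  have hsplit : B3 l b = (∫ ψ in (0:ℝ)..ψ₀, 2 * (l * sin ψ))
      + ∫ ψ in ψ₀..π / 2, 2 * (l * sin ψ) - 2 * l * √(sin ψ ^ 2 - t ^ 2)
        + 2 * b * (π / 2 - arcsin (t / sin ψ)) :=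
    integral_split_at_arcsin hb hbl
      (continuous_parametric_intervalIntegral_of_continuous' (by fun_prop) _ _).continuousOn
      (fun ψ hψ hψb => integral_min_mul_sin_of_le
        (mul_nonneg hl.le (sin_nonneg_of_nonneg_of_le_pi hψ.1 (by linarith [hψ.2, pi_pos]))) hψb)
      (fun ψ _ hψb => by
        rw [integral_min_mul_sin_of_ge hb hψb, ← div_div,
          show (l * sin ψ) ^ 2 - b ^ 2 = l ^ 2 * (sin ψ ^ 2 - t ^ 2) by rw [← hlt]; ring,
          sqrt_mul (sq_nonneg l), sqrt_sq hl.le]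
        ring)
  have hsin : Continuous fun ψ => 2 * (l * sin ψ) := by fun_prop
  have hsqrt : ContinuousOn (fun ψ => 2 * l * √(sin ψ ^ 2 - t ^ 2)) (uIcc ψ₀ (π / 2)) := by
    fun_prop
  have harcsin : ContinuousOn (fun ψ => 2 * b * (π / 2 - arcsin (t / sin ψ)))
      (uIcc ψ₀ (π / 2)) := by
    fun_prop (disch := exact hsin_pos)
  have htotal : (∫ ψ in (0:ℝ)..ψ₀, 2 * (l * sin ψ)) + ∫ ψ in ψ₀..π / 2, 2 * (l * sin ψ)
      = 2 * l := by
    rw [integral_add_adjacent_intervals (hsin.intervalIntegrable _ _) (hsin.intervalIntegrable _ _),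
      intervalIntegral.integral_const_mul, intervalIntegral.integral_const_mul, integral_sin]
    simp
  rw [hsplit, integral_add ((hsin.intervalIntegrable _ _).sub hsqrt.intervalIntegrable)
      harcsin.intervalIntegrable,
    integral_sub (hsin.intervalIntegrable _ _) hsqrt.intervalIntegrable, Faux, Gaux,
    intervalIntegral.integral_const_mul (2 * l), intervalIntegral.integral_const_mul (2 * b)]
  linarith

theorem AB3_eq {l a b : ℝ} (hb : 0 < b) (hbl : b ≤ l) (hla : l ≤ a) :
    AB3 l a b = l ^ 2 / 2 * arcsin (b / l) + 3 / 2 * (l * b) * √(1 - b ^ 2 / l ^ 2)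
      - b ^ 2 * (π / 2 - arcsin (b / l)) := by
  have hl : 0 < l := hb.trans_le hbl
  have hsin : l * sin (arcsin (b / l)) = b := by
    rw [sin_arcsin (by linarith [div_nonneg hb.le hl.le]) ((div_le_one hl).2 hbl)]
    field_simp
  have hsplit : AB3 l a b = (∫ ψ in (0:ℝ)..arcsin (b / l), l ^ 2 * sin ψ ^ 2)
      + ∫ ψ in arcsin (b / l)..π / 2, 2 * b * l * sin ψ - b ^ 2 := by
    refine integral_split_at_arcsin hb hbl
      (continuous_parametric_intervalIntegral_of_continuous' (by fun_prop) _ _).continuousOn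
      (fun ψ hψ hψb => ?_) (fun ψ _ hψb => ?_)
    · have hsin_nonneg := sin_nonneg_of_nonneg_of_le_pi hψ.1 (by linarith [hψ.2, pi_pos])
      rw [integral_min_mul_abs_cos_mul_min_mul_sin_of_le (mul_nonneg hl.le hsin_nonneg)
        ((mul_le_of_le_one_right hl.le (sin_le_one ψ)).trans hla) hψb]
      ring
    · rw [integral_min_mul_abs_cos_mul_min_mul_sin_of_ge hb hψb
        ((mul_le_of_le_one_right hl.le (sin_le_one ψ)).trans hla)]
      ring
  rw [hsplit, intervalIntegral.integral_const_mul, integral_sin_sq,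
    integral_sub ((by fun_prop : Continuous fun ψ => 2 * b * l * sin ψ).intervalIntegrable _ _)
      intervalIntegrable_const,
    intervalIntegral.integral_const_mul, integral_sin, intervalIntegral.integral_const,
    smul_eq_mul, cos_arcsin, sin_zero, cos_pi_div_two, div_pow]
  linear_combination (-(l / 2) * √(1 - b ^ 2 / l ^ 2)) * hsin

theorem stmt16 (l a b : ℝ) (hb : 0 < b) (hbl : b < l) (hla : l ≤ a) :
    S3 l a b = 2 * l * b
      + (2 * l * a - 2 * l * a * Faux (Real.arcsin (b / l)) (π / 2) (b / l)
        + 2 * a * b * Gaux (Real.arcsin (b / l)) (π / 2) (b / l))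
      - (l ^ 2 / 2 * Real.arcsin (b / l)
        + 3 / 2 * (l * b) * Real.sqrt (1 - b ^ 2 / l ^ 2)
        - b ^ 2 * (π / 2 - Real.arcsin (b / l))) := by
  rw [S3, A3_eq_of_le (hb.trans hbl).le hla, B3_eq hb hbl.le, AB3_eq hb hbl.le hla]
  ring
end
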